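/- Let L_W : ℝⁿ → ℝ be differentiable with M-Lipschitz gradient. Suppose at parameter θ_t the vectors G_W = ∇L_W(θ_t) and G_C satisfy ‖G_W‖² ≥ γ_t²‖G_C‖² with γ_t ∈ (0, 1], and let θ_{t+1} = θ_t − (η/m)(G_W + γ_t G_C) with 0 < η < m/M. Then L_W(θ_{t+1}) ≤ L_W(θ_t) − (1/m)(η/2 − Mη²/(2m)) ‖G_W + γ_t G_C‖², so L_W strictly decreases unless G_W + γ_t G_C = 0. -/

import Mathlib

/-!
Along the segment from `x` to `x + v` the directional derivative of `f` exceeds `⟪∇f x, v⟫` by at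
most `M t ‖v‖²`, which integrates to the quadratic upper bound
`f (x + v) ≤ f x + ⟪∇f x, v⟫ + M/2 ‖v‖²`. The condition `‖G_W‖² ≥ γ²‖G_C‖²` says exactly that
`S = G_W + γ G_C` satisfies `‖S‖² ≤ 2⟪G_W, S⟫`, so a step of length `α = η/m` against `S` lowers
`L_W` by at least `(α/2 - Mα²/2)‖S‖²`, which is positive when `Mα < 1` and `S ≠ 0`.
-/

open InnerProductSpace RealInnerProductSpace

section DescentLemma

variable {E : Type*} [NormedAddCommGroup E] [InnerProductSpace ℝ E] [CompleteSpace E]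
  {f : E → ℝ} {M : ℝ}

lemma Differentiable.hasDerivAt_add_smul (hf : Differentiable ℝ f) (x v : E) (t : ℝ) :
    HasDerivAt (fun s : ℝ => f (x + s • v)) ⟪gradient f (x + t • v), v⟫ t := by
  have hline : HasDerivAt (fun s : ℝ => x + s • v) v t := by
    simpa using ((hasDerivAt_id t).smul_const v).const_add x
  have hcomp := (hf (x + t • v)).hasGradientAt.hasFDerivAt.comp_hasDerivAt t hline
  rwa [toDual_apply_apply] at hcomp

lemma inner_gradient_add_smul_sub_le
    (hlip : ∀ x y, ‖gradient f x - gradient f y‖ ≤ M * ‖x - y‖) (x v : E) {t : ℝ} (ht : 0 ≤ t) :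
    ⟪gradient f (x + t • v), v⟫ - ⟪gradient f x, v⟫ ≤ M * t * ‖v‖ ^ 2 :=
  calc ⟪gradient f (x + t • v), v⟫ - ⟪gradient f x, v⟫
      = ⟪gradient f (x + t • v) - gradient f x, v⟫ := (inner_sub_left _ _ _).symm
    _ ≤ ‖gradient f (x + t • v) - gradient f x‖ * ‖v‖ := real_inner_le_norm _ _
    _ ≤ M * ‖(x + t • v) - x‖ * ‖v‖ := by gcongr; exact hlip _ _
    _ = M * t * ‖v‖ ^ 2 := by
      rw [add_sub_cancel_left, norm_smul, Real.norm_of_nonneg ht]; ring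

theorem le_add_inner_gradient_add_of_lipschitz_gradient (hf : Differentiable ℝ f)
    (hlip : ∀ x y, ‖gradient f x - gradient f y‖ ≤ M * ‖x - y‖) (x v : E) :
    f (x + v) ≤ f x + ⟪gradient f x, v⟫ + M / 2 * ‖v‖ ^ 2 := by
  set φ : ℝ → ℝ := fun t => f (x + t • v) - t * ⟪gradient f x, v⟫ - M * t ^ 2 / 2 * ‖v‖ ^ 2
  have hφ : ∀ t, HasDerivAt φ
      (⟪gradient f (x + t • v), v⟫ - ⟪gradient f x, v⟫ - M * t * ‖v‖ ^ 2) t := by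
    intro t
    have hquad := (((hasDerivAt_pow 2 t).const_mul M).div_const 2).mul_const (‖v‖ ^ 2)
    refine (((hf.hasDerivAt_add_smul x v t).sub
      ((hasDerivAt_id t).mul_const ⟪gradient f x, v⟫)).sub hquad).congr_deriv ?_
    simp only [one_mul, Nat.cast_ofNat, pow_one, Nat.add_one_sub_one]
    ring
  have hanti : AntitoneOn φ (Set.Icc 0 1) := by
    refine antitoneOn_of_hasDerivWithinAt_nonpos (convex_Icc 0 1)
      (fun t _ => (hφ t).continuousAt.continuousWithinAt)
      (fun t _ => (hφ t).hasDerivWithinAt) fun t ht => ?_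
    rw [interior_Icc] at ht
    linarith [inner_gradient_add_smul_sub_le hlip x v ht.1.le]
  have h01 := hanti (Set.left_mem_Icc.mpr zero_le_one) (Set.right_mem_Icc.mpr zero_le_one)
    zero_le_one
  simp only [φ, zero_smul, add_zero, one_smul, zero_mul, one_mul, one_pow, sub_zero,
    mul_one, ne_eq, OfNat.ofNat_ne_zero, not_false_eq_true, zero_pow, mul_zero, zero_div] at h01
  linarith

theorem le_sub_of_lipschitz_gradient_of_sq_norm_le_two_inner (hf : Differentiable ℝ f)
    (hlip : ∀ x y, ‖gradient f x - gradient f y‖ ≤ M * ‖x - y‖) (x S : E)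
    (hS : ‖S‖ ^ 2 ≤ 2 * ⟪gradient f x, S⟫) {α : ℝ} (hα : 0 ≤ α) :
    f (x - α • S) ≤ f x - (α / 2 - M * α ^ 2 / 2) * ‖S‖ ^ 2 := by
  have hstep := le_add_inner_gradient_add_of_lipschitz_gradient hf hlip x (-(α • S))
  rw [← sub_eq_add_neg, inner_neg_right, real_inner_smul_right, norm_neg, norm_smul,
    Real.norm_of_nonneg hα] at hstep
  nlinarith

end DescentLemma

lemma sq_norm_add_smul_le_two_inner {E : Type*} [NormedAddCommGroup E] [InnerProductSpace ℝ E]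
    (G C : E) {γ : ℝ} (h : γ ^ 2 * ‖C‖ ^ 2 ≤ ‖G‖ ^ 2) :
    ‖G + γ • C‖ ^ 2 ≤ 2 * ⟪G, G + γ • C⟫ := by
  rw [norm_add_sq_real, inner_add_right, real_inner_self_eq_norm_sq, norm_smul,
    real_inner_smul_right, Real.norm_eq_abs, mul_pow, sq_abs]
  linarith

theorem stmt8_general {n : ℕ} (LW : EuclideanSpace ℝ (Fin n) → ℝ) (M η m γ : ℝ)
    (hLW : Differentiable ℝ LW)
    (hlip : ∀ x y, ‖gradient LW x - gradient LW y‖ ≤ M * ‖x - y‖)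
    (θt : EuclideanSpace ℝ (Fin n)) (GC : EuclideanSpace ℝ (Fin n))
    (hG : ‖gradient LW θt‖ ^ 2 ≥ γ ^ 2 * ‖GC‖ ^ 2)
    (hm : 0 < m) (hη : 0 < η) (hηM : η < m / M)
    (θt1 : EuclideanSpace ℝ (Fin n))
    (hθ : θt1 = θt - (η / m) • (gradient LW θt + γ • GC)) :
    LW θt1 ≤ LW θt - (1 / m) * (η / 2 - M * η ^ 2 / (2 * m)) * ‖gradient LW θt + γ • GC‖ ^ 2
    ∧ (gradient LW θt + γ • GC ≠ 0 → LW θt1 < LW θt) := by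
  have hdesc := le_sub_of_lipschitz_gradient_of_sq_norm_le_two_inner hLW hlip θt _
    (sq_norm_add_smul_le_two_inner _ GC hG) (div_nonneg hη.le hm.le)
  rw [← hθ] at hdesc
  have hcoef : (1 / m) * (η / 2 - M * η ^ 2 / (2 * m)) = η / m / 2 - M * (η / m) ^ 2 / 2 := by
    field_simp
  have hMη : M * η < m := by
    rcases le_or_gt M 0 with hM | hM
    · nlinarith
    · rwa [lt_div_iff₀ hM, mul_comm] at hηM
  have hcoef_pos : 0 < (1 / m) * (η / 2 - M * η ^ 2 / (2 * m)) := by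
    have : 0 < η / 2 - M * η ^ 2 / (2 * m) := by
      rw [sub_pos, div_lt_div_iff₀ (by positivity) two_pos]
      nlinarith
    positivity
  rw [← hcoef] at hdesc
  refine ⟨hdesc, fun hS => ?_⟩
  linarith [mul_pos hcoef_pos (pow_pos (norm_pos_iff.mpr hS) 2)]

/-- DSGD descent step on `L_W`: with `M`-Lipschitz gradient, `γ_t ∈ (0,1]`,
`‖G_W‖² ≥ γ_t²‖G_C‖²` and `0 < η < m/M`, the update
`θ_{t+1} = θ_t − (η/m)(G_W + γ_t G_C)` satisfies
`L_W(θ_{t+1}) ≤ L_W(θ_t) − (1/m)(η/2 − Mη²/(2m))‖G_W + γ_t G_C‖²`,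
with strict decrease unless `G_W + γ_t G_C = 0`. -/
theorem stmt8 {n : ℕ} (LW : EuclideanSpace ℝ (Fin n) → ℝ) (M η m γ : ℝ)
    (hLW : Differentiable ℝ LW)
    (hlip : ∀ x y, ‖gradient LW x - gradient LW y‖ ≤ M * ‖x - y‖)
    (θt : EuclideanSpace ℝ (Fin n)) (GC : EuclideanSpace ℝ (Fin n))
    (hγ : γ ∈ Set.Ioc (0 : ℝ) 1)
    (hG : ‖gradient LW θt‖ ^ 2 ≥ γ ^ 2 * ‖GC‖ ^ 2)
    (hm : 0 < m) (hη : 0 < η) (hηM : η < m / M)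
    (θt1 : EuclideanSpace ℝ (Fin n))
    (hθ : θt1 = θt - (η / m) • (gradient LW θt + γ • GC)) :
    LW θt1 ≤ LW θt - (1 / m) * (η / 2 - M * η ^ 2 / (2 * m)) * ‖gradient LW θt + γ • GC‖ ^ 2
    ∧ (gradient LW θt + γ • GC ≠ 0 → LW θt1 < LW θt) :=
  stmt8_general LW M η m γ hLW hlip θt GC hG hm hη hηM θt1 hθ
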